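/- Let f' : 𝓜 → 𝓜 be any function on the set of Morse gauges (increasing maps ℝ≥1 × ℝ≥0 → ℝ≥0, continuous in the second argument) with f'(M) ≥ M pointwise for all M. Define f''(M)(λ, ε) = inf_{M' ≥ M} f'(M')(λ, ε) + 1 and f(M)(λ, ε) = ∫_ε^{ε+1} f''(M)(λ, x) dx. Then: (i) f is increasing with respect to the pointwise partial order on Morse gauges; (ii) for every M, f(M) is an increasing Morse gauge continuous in the second coordinate; and (iii) f(M) ≥ M pointwise. -/

import Mathlib

open Set Metric

universe u

/-- `γ` restricted to `I` is a `(lam, eps)`-quasi-geodesic. -/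
def IsQuasiGeodesicOn {X : Type*} [MetricSpace X] (γ : ℝ → X) (I : Set ℝ)
    (lam eps : ℝ) : Prop :=
  ∀ s ∈ I, ∀ t ∈ I,
    (1 / lam) * |s - t| - eps ≤ dist (γ s) (γ t) ∧ dist (γ s) (γ t) ≤ lam * |s - t| + eps

/-- `γ` restricted to `I` is a (unit-speed) geodesic. -/
def IsGeodesicOn {X : Type*} [MetricSpace X] (γ : ℝ → X) (I : Set ℝ) : Prop :=
  ∀ s ∈ I, ∀ t ∈ I, dist (γ s) (γ t) = |s - t|

/-- A metric space is geodesic if any two points are joined by a geodesic. -/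
def GeodesicSpace (X : Type*) [MetricSpace X] : Prop :=
  ∀ x y : X, ∃ γ : ℝ → X, γ 0 = x ∧ γ (dist x y) = y ∧ IsGeodesicOn γ (Icc 0 (dist x y))

/-- A Morse gauge: an increasing map `ℝ≥1 × ℝ≥0 → ℝ≥0`, continuous in the second argument. -/
def IsMorseGauge (M : ℝ → ℝ → ℝ) : Prop :=
  (∀ l e, 1 ≤ l → 0 ≤ e → 0 ≤ M l e) ∧
  (∀ l l' e e', 1 ≤ l → 0 ≤ e → l ≤ l' → e ≤ e' → M l e ≤ M l' e') ∧
  (∀ l, 1 ≤ l → ContinuousOn (fun e => M l e) (Ici 0))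

/-- Pointwise partial order on Morse gauges (on the domain `ℝ≥1 × ℝ≥0`). -/
def GaugeLE (M N : ℝ → ℝ → ℝ) : Prop :=
  ∀ l e, 1 ≤ l → 0 ≤ e → M l e ≤ N l e

/-- `γ` restricted to `I` is `M`-Morse: every continuous `(lam, eps)`-quasi-geodesic with
endpoints on `γ` lies in the closed `M lam eps`-neighbourhood of `γ`. -/
def IsMorseWith {X : Type*} [MetricSpace X] (M : ℝ → ℝ → ℝ) (γ : ℝ → X) (I : Set ℝ) : Prop :=
  ∀ lam eps : ℝ, 1 ≤ lam → 0 ≤ eps →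
    ∀ (η : ℝ → X) (a b : ℝ), a ≤ b →
      ContinuousOn η (Icc a b) → IsQuasiGeodesicOn η (Icc a b) lam eps →
      η a ∈ γ '' I → η b ∈ γ '' I →
      ∀ t ∈ Icc a b, ∃ s ∈ I, dist (η t) (γ s) ≤ M lam eps

/-- The constant `δ_M` associated to a Morse gauge `M`. -/
def morseDelta (M : ℝ → ℝ → ℝ) : ℝ :=
  max (4 * M 1 (2 * M 5 0) + 2 * M 5 0) (8 * M 3 0)

/-!
Taking the infimum of `f' M'` over all gauges `M' ≥ M` makes `f''` monotone in `M`, and increasing in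
`(λ, ε)` because every `f' M'` is; it still dominates `M` since `f' M' ≥ M' ≥ M`. Averaging an
increasing function of `ε` over the window `[ε, ε + 1]` keeps it increasing and above its value at
`ε`, and makes it continuous: for a monotone `g` the average is the difference `F (ε + 1) - F ε` of
the continuous primitive `F` of `g`.
-/

open MeasureTheory intervalIntegral

section UnitWindow

variable {g h : ℝ → ℝ}

theorem MonotoneOn.intervalIntegrable_of_nonneg (hg : MonotoneOn g (Ici 0)) {a b : ℝ}
    (ha : 0 ≤ a) (hb : 0 ≤ b) : IntervalIntegrable g volume a b :=
  MonotoneOn.intervalIntegrable (hg.mono fun _ hx => (le_min ha hb).trans hx.1)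

theorem Monotone.monotone_integral_unit_window (hg : Monotone g) :
    Monotone fun e => ∫ x in e..e + 1, g x := by
  intro e e' hee'
  have hshift : ∀ c, ∫ x in c..c + 1, g x = ∫ x in (0 : ℝ)..1, g (x + c) := fun c => by
    rw [integral_comp_add_right, zero_add, add_comm 1 c]
  simp only [hshift]
  exact integral_mono zero_le_one
    (hg.comp (monotone_id.add_const e)).intervalIntegrable
    (hg.comp (monotone_id.add_const e')).intervalIntegrable
    fun x => hg (add_le_add_right hee' x)

theorem Monotone.continuous_integral_unit_window (hg : Monotone g) :
    Continuous fun e => ∫ x in e..e + 1, g x := by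
  have hint : ∀ a b, IntervalIntegrable g volume a b := fun _ _ => hg.intervalIntegrable
  have hprim := continuous_primitive hint 0
  refine ((hprim.comp (continuous_add_const 1)).sub hprim).congr fun e => ?_
  exact integral_interval_sub_left (hint 0 (e + 1)) (hint 0 e)

-- Extending `g` by the constant `g 0` to the left reduces the statements on `Ici 0` below to the
-- globally monotone case.
theorem MonotoneOn.monotone_comp_max_zero (hg : MonotoneOn g (Ici 0)) :
    Monotone fun x => g (max x 0) :=
  fun x y hxy => hg (mem_Ici.2 (le_max_right x 0)) (mem_Ici.2 (le_max_right y 0))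
    (max_le_max_right 0 hxy)

theorem integral_unit_window_comp_max_zero {e : ℝ} (he : 0 ≤ e) :
    ∫ x in e..e + 1, g (max x 0) = ∫ x in e..e + 1, g x := by
  refine integral_congr fun x hx => ?_
  rw [uIcc_of_le (by linarith)] at hx
  simp only [max_eq_left (he.trans hx.1)]

theorem MonotoneOn.monotoneOn_integral_unit_window (hg : MonotoneOn g (Ici 0)) :
    MonotoneOn (fun e => ∫ x in e..e + 1, g x) (Ici 0) := by
  intro e he e' he' hee'
  dsimp only
  rw [← integral_unit_window_comp_max_zero he, ← integral_unit_window_comp_max_zero he']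
  exact hg.monotone_comp_max_zero.monotone_integral_unit_window hee'

theorem MonotoneOn.continuousOn_integral_unit_window (hg : MonotoneOn g (Ici 0)) :
    ContinuousOn (fun e => ∫ x in e..e + 1, g x) (Ici 0) :=
  hg.monotone_comp_max_zero.continuous_integral_unit_window.continuousOn.congr
    fun _ he => (integral_unit_window_comp_max_zero he).symm

theorem MonotoneOn.le_integral_unit_window (hg : MonotoneOn g (Ici 0)) {e : ℝ} (he : 0 ≤ e) :
    g e ≤ ∫ x in e..e + 1, g x := by
  calc g e = ∫ _ in e..e + 1, g e := by simp
    _ ≤ ∫ x in e..e + 1, g x := integral_mono_on (by linarith) intervalIntegrable_const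
      (hg.intervalIntegrable_of_nonneg he (by linarith)) fun x hx => hg he (he.trans hx.1) hx.1

theorem integral_unit_window_mono_of_le (hg : MonotoneOn g (Ici 0)) (hh : MonotoneOn h (Ici 0))
    (hgh : ∀ x, 0 ≤ x → g x ≤ h x) {e : ℝ} (he : 0 ≤ e) :
    ∫ x in e..e + 1, g x ≤ ∫ x in e..e + 1, h x :=
  integral_mono_on (by linarith) (hg.intervalIntegrable_of_nonneg he (by linarith))
    (hh.intervalIntegrable_of_nonneg he (by linarith)) fun x hx => hgh x (he.trans hx.1)

end UnitWindow

section Gauges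

variable {f' : (ℝ → ℝ → ℝ) → ℝ → ℝ → ℝ} {G H M N P : ℝ → ℝ → ℝ}

def GaugeMonotone (G : ℝ → ℝ → ℝ) : Prop :=
  ∀ l l' e e', 1 ≤ l → 0 ≤ e → l ≤ l' → e ≤ e' → G l e ≤ G l' e'

theorem GaugeLE.trans (hMN : GaugeLE M N) (hNP : GaugeLE N P) : GaugeLE M P :=
  fun l e hl he => (hMN l e hl he).trans (hNP l e hl he)

theorem GaugeMonotone.monotoneOn (hG : GaugeMonotone G) {l : ℝ} (hl : 1 ≤ l) :
    MonotoneOn (G l) (Ici 0) :=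
  fun _ hx _ _ hxy => hG l l _ _ hl hx le_rfl hxy

noncomputable def slidingAverage (G : ℝ → ℝ → ℝ) : ℝ → ℝ → ℝ :=
  fun l e => ∫ x in e..e + 1, G l x

theorem gaugeLE_slidingAverage (hG : GaugeMonotone G) : GaugeLE G (slidingAverage G) :=
  fun _ _ hl he => (hG.monotoneOn hl).le_integral_unit_window he

theorem gaugeMonotone_slidingAverage (hG : GaugeMonotone G) :
    GaugeMonotone (slidingAverage G) := by
  intro l l' e e' hl he hll' hee'
  have hl' : 1 ≤ l' := hl.trans hll'
  calc slidingAverage G l e ≤ slidingAverage G l' e :=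
        integral_unit_window_mono_of_le (hG.monotoneOn hl) (hG.monotoneOn hl')
          (fun x hx => hG l l' x x hl hx hll' le_rfl) he
    _ ≤ slidingAverage G l' e' :=
        (hG.monotoneOn hl').monotoneOn_integral_unit_window he (he.trans hee') hee'

theorem isMorseGauge_slidingAverage (hM : IsMorseGauge M) (hMG : GaugeLE M G)
    (hG : GaugeMonotone G) : IsMorseGauge (slidingAverage G) :=
  ⟨fun l e hl he => (hM.1 l e hl he).trans ((hMG.trans (gaugeLE_slidingAverage hG)) l e hl he),
    gaugeMonotone_slidingAverage hG, fun _ hl => (hG.monotoneOn hl).continuousOn_integral_unit_window⟩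

theorem slidingAverage_mono (hG : GaugeMonotone G) (hH : GaugeMonotone H) (hGH : GaugeLE G H) :
    GaugeLE (slidingAverage G) (slidingAverage H) :=
  fun _ _ hl he => integral_unit_window_mono_of_le (hG.monotoneOn hl) (hH.monotoneOn hl)
    (fun x hx => hGH _ x hl hx) he

def dominatingValues (f' : (ℝ → ℝ → ℝ) → ℝ → ℝ → ℝ) (M : ℝ → ℝ → ℝ) (l e : ℝ) : Set ℝ :=
  {y | ∃ M' : ℝ → ℝ → ℝ, IsMorseGauge M' ∧ GaugeLE M M' ∧ y = f' M' l e}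

noncomputable def gaugeRegularization (f' : (ℝ → ℝ → ℝ) → ℝ → ℝ → ℝ) (M : ℝ → ℝ → ℝ) : ℝ → ℝ → ℝ :=
  fun l e => sInf (dominatingValues f' M l e) + 1

theorem mem_lowerBounds_dominatingValues (hf'ge : ∀ M, IsMorseGauge M → GaugeLE M (f' M))
    {l e : ℝ} (hl : 1 ≤ l) (he : 0 ≤ e) : M l e ∈ lowerBounds (dominatingValues f' M l e) := by
  rintro _ ⟨M', hM', hMM', rfl⟩
  exact (hMM'.trans (hf'ge M' hM')) l e hl he

theorem dominatingValues_nonempty (hM : IsMorseGauge M) (l e : ℝ) :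
    (dominatingValues f' M l e).Nonempty :=
  ⟨f' M l e, M, hM, fun _ _ _ _ => le_rfl, rfl⟩

theorem gaugeLE_gaugeRegularization (hf'ge : ∀ M, IsMorseGauge M → GaugeLE M (f' M))
    (hM : IsMorseGauge M) : GaugeLE M (gaugeRegularization f' M) := fun l e hl he => by
  have := le_csInf (dominatingValues_nonempty hM l e) (mem_lowerBounds_dominatingValues hf'ge hl he)
  exact this.trans (le_add_of_nonneg_right zero_le_one)

theorem gaugeMonotone_gaugeRegularization (hf'mono : ∀ M, IsMorseGauge M → GaugeMonotone (f' M))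
    (hf'ge : ∀ M, IsMorseGauge M → GaugeLE M (f' M)) (hM : IsMorseGauge M) :
    GaugeMonotone (gaugeRegularization f' M) := by
  intro l l' e e' hl he hll' hee'
  refine add_le_add_left (le_csInf (dominatingValues_nonempty hM l' e') ?_) 1
  rintro _ ⟨M', hM', hMM', rfl⟩
  exact (csInf_le ⟨M l e, mem_lowerBounds_dominatingValues hf'ge hl he⟩ ⟨M', hM', hMM', rfl⟩).trans
    (hf'mono M' hM' l l' e e' hl he hll' hee')

theorem gaugeRegularization_mono (hf'ge : ∀ M, IsMorseGauge M → GaugeLE M (f' M))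
    (hN : IsMorseGauge N) (hMN : GaugeLE M N) :
    GaugeLE (gaugeRegularization f' M) (gaugeRegularization f' N) := fun l e hl he => by
  refine add_le_add_left (csInf_le_csInf ⟨M l e, mem_lowerBounds_dominatingValues hf'ge hl he⟩
    (dominatingValues_nonempty hN l e) ?_) 1
  rintro _ ⟨M', hM', hNM', rfl⟩
  exact ⟨M', hM', hMN.trans hNM', rfl⟩

end Gauges

/-- monotone regularization of gauge functions: Let `f' : 𝓜 → 𝓜` be any
function on Morse gauges with `f' M ≥ M` pointwise.  Define
`f'' M lam eps = inf {f' M' lam eps | M' ∈ 𝓜, M' ≥ M} + 1` and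
`f M lam eps = ∫ x in eps..(eps+1), f'' M lam x`.  Then `f M` is a Morse gauge (increasing
and continuous in the second coordinate), `f M ≥ M` pointwise, and `f` is increasing with
respect to the pointwise partial order on Morse gauges. -/
theorem statement19
    (f' : (ℝ → ℝ → ℝ) → (ℝ → ℝ → ℝ))
    (hf'gauge : ∀ M, IsMorseGauge M → IsMorseGauge (f' M))
    (hf'ge : ∀ M, IsMorseGauge M → GaugeLE M (f' M))
    (f'' f : (ℝ → ℝ → ℝ) → ℝ → ℝ → ℝ)
    (hf'' : ∀ M lam eps, f'' M lam eps =
      sInf {y : ℝ | ∃ M' : ℝ → ℝ → ℝ, IsMorseGauge M' ∧ GaugeLE M M' ∧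
        y = f' M' lam eps} + 1)
    (hf : ∀ M lam eps, f M lam eps = ∫ x in eps..(eps + 1), f'' M lam x) :
    ∀ M : ℝ → ℝ → ℝ, IsMorseGauge M →
      IsMorseGauge (f M) ∧
      GaugeLE M (f M) ∧
      ∀ N : ℝ → ℝ → ℝ, IsMorseGauge N → GaugeLE M N → GaugeLE (f M) (f N) := by
  obtain rfl : f'' = gaugeRegularization f' := funext fun M => funext fun l => funext (hf'' M l)
  obtain rfl : f = fun M => slidingAverage (gaugeRegularization f' M) :=
    funext fun M => funext fun l => funext (hf M l)
  have hmono : ∀ M, IsMorseGauge M → GaugeMonotone (gaugeRegularization f' M) :=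
    fun _ => gaugeMonotone_gaugeRegularization (fun M hM => (hf'gauge M hM).2.1) hf'ge
  intro M hM
  have hMreg := gaugeLE_gaugeRegularization hf'ge hM
  exact ⟨isMorseGauge_slidingAverage hM hMreg (hmono M hM),
    hMreg.trans (gaugeLE_slidingAverage (hmono M hM)),
    fun N hN hMN => slidingAverage_mono (hmono M hM) (hmono N hN)
      (gaugeRegularization_mono hf'ge hN hMN)⟩
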